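/- arXiv:1912.01460 — 2 statements merged into one kernel-verified Lean document; each statement's English description precedes it below -/
import Mathlib

section
/- Let N ≥ 1 be an integer and p ∈ (0,1). Let g : (0,∞) → [0,∞) be a C^∞ function which is nonincreasing, vanishes on [b,∞) for some b > 0 and is strictly positive on (0,b), and satisfies lim_{r→0⁺} r^{N} g(r)^p = 0 and 0 < ∫_{ℝ^N} g(|x|)^p dx < ∞. Then the radial function f(x) = g(|x|) satisfies the reverse L^p-Sobolev inequality (∫_{ℝ^N} g(|x|)^p dx)^{1/p} ≥ (p/N) (∫_{ℝ^N} (|x| |g'(|x|)|)^p dx)^{1/p}. -/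
open MeasureTheory ENNReal NNReal Filter Set Metric

local notation "dim" => Module.finrank ℝ

section Polar

variable {E : Type*} [NormedAddCommGroup E] [NormedSpace ℝ E] [Nontrivial E]
  [MeasurableSpace E] [FiniteDimensional ℝ E] [BorelSpace E]
  (μ : Measure E) [μ.IsAddHaarMeasure]

lemma lintegral_fun_norm_addHaar' (f : ℝ → ℝ≥0∞)
    (hf : Measurable f) :
    ∫⁻ x, f ‖x‖ ∂μ = μ.toSphere univ *
      ∫⁻ y in Ioi (0 : ℝ), ENNReal.ofReal (y ^ (dim E - 1)) * f y := by
  have hmf : Measurable fun y : Ioi (0:ℝ) => f y.1 := hf.comp measurable_subtype_coe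
  calc
    ∫⁻ x, f ‖x‖ ∂μ = ∫⁻ x : ({(0)}ᶜ : Set E), f ‖x.1‖ ∂(μ.comap (↑)) := by
      rw [lintegral_subtype_comap (measurableSet_singleton (0:E)).compl (fun x => f ‖x‖),
        Measure.restrict_congr_set (ae_eq_univ.2 (by simp [measure_singleton])),
        Measure.restrict_univ]
    _ = ∫⁻ x : sphere (0 : E) 1 × Ioi (0 : ℝ), f x.2
        ∂(μ.toSphere.prod (.volumeIoiPow (dim E - 1))) := by
      rw [← μ.measurePreserving_homeomorphUnitSphereProd.lintegral_comp_emb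
        (Homeomorph.measurableEmbedding _) (fun x => f x.2)]
      simp [homeomorphUnitSphereProd, homeomorphSphereProd]
    _ = μ.toSphere univ * ∫⁻ y : Ioi (0:ℝ), f y ∂(Measure.volumeIoiPow (dim E - 1)) := by
      have := lintegral_prod_mul (μ := μ.toSphere) (ν := Measure.volumeIoiPow (dim E - 1))
        (f := fun _ : sphere (0:E) 1 => (1:ℝ≥0∞)) (g := fun y : Ioi (0:ℝ) => f y.1)
        aemeasurable_const hmf.aemeasurable
      simpa using this
    _ = _ := by
      rw [Measure.volumeIoiPow]
      rw [lintegral_withDensity_eq_lintegral_mul _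
        (f := fun r : Ioi (0:ℝ) => ENNReal.ofReal (r.1 ^ (dim E - 1))) (by fun_prop) hmf]
      have := lintegral_subtype_comap (μ := volume) (s := Ioi (0:ℝ)) measurableSet_Ioi
          (fun y : ℝ => ENNReal.ofReal (y ^ (dim E - 1)) * f y)
      rw [← this]
      simp only [Pi.mul_apply]

end Polar

section OneDim

variable {N : ℕ} {p b : ℝ} {g : ℝ → ℝ}

/-- The core one-dimensional inequality. -/
lemma oneDim (hN : 1 ≤ N) (hp : 0 < p) (hp1 : p < 1) (hb : 0 < b)
    (hsmooth : ContDiffOn ℝ (⊤ : ℕ∞) g (Set.Ioi 0))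
    (hnonneg : ∀ r, 0 < r → 0 ≤ g r)
    (hdecr : AntitoneOn g (Set.Ioi 0))
    (hpos : ∀ r, 0 < r → r < b → 0 < g r)
    (hlim : Tendsto (fun r : ℝ => r ^ (N : ℝ) * g r ^ p)
      (nhdsWithin 0 (Set.Ioi 0)) (nhds 0))
    (hB0 : (∫⁻ r in Ioo (0:ℝ) b, ENNReal.ofReal (r ^ ((N:ℝ)-1) * g r ^ p)) ≠ 0)
    (hBtop : (∫⁻ r in Ioo (0:ℝ) b, ENNReal.ofReal (r ^ ((N:ℝ)-1) * g r ^ p)) ≠ ⊤) :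
    (∫⁻ r in Ioo (0:ℝ) b, ENNReal.ofReal (r ^ ((N:ℝ)-1) * (r * |deriv g r|) ^ p))
      ≤ ENNReal.ofReal ((N:ℝ)/p) ^ p *
        (∫⁻ r in Ioo (0:ℝ) b, ENNReal.ofReal (r ^ ((N:ℝ)-1) * g r ^ p)) := by
  set w1 : ℝ → ℝ := fun r => r ^ (N:ℝ) * (|deriv g r| * g r ^ (p-1)) with hw1
  set w2 : ℝ → ℝ := fun r => r ^ ((N:ℝ)-1) * g r ^ p with hw2
  set B : ℝ≥0∞ := ∫⁻ r in Ioo (0:ℝ) b, ENNReal.ofReal (w2 r) with hBdef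
  set D : ℝ≥0∞ := ∫⁻ r in Ioo (0:ℝ) b, ENNReal.ofReal (w1 r) with hDdef
  have hg_cont : ContinuousOn g (Ioi (0:ℝ)) := hsmooth.continuousOn
  have hg'_cont : ContinuousOn (deriv g) (Ioi (0:ℝ)) :=
    hsmooth.continuousOn_deriv_of_isOpen isOpen_Ioi (by simp)
  have hIoo : Ioo (0:ℝ) b ⊆ Ioi (0:ℝ) := Ioo_subset_Ioi_self
  have hw1_cont : ContinuousOn w1 (Ioo (0:ℝ) b) := by
    refine ContinuousOn.mul ?_ (ContinuousOn.mul ((hg'_cont.mono hIoo).abs) ?_)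
    · exact fun r hr => ((Real.continuousAt_rpow_const r _ (Or.inl hr.1.ne')).continuousWithinAt)
    · exact (hg_cont.mono hIoo).rpow_const (fun r hr => Or.inl (hpos r hr.1 hr.2).ne')
  have hw2_cont : ContinuousOn w2 (Ioo (0:ℝ) b) := by
    refine ContinuousOn.mul ?_ ?_
    · exact fun r hr => ((Real.continuousAt_rpow_const r _ (Or.inl hr.1.ne')).continuousWithinAt)
    · exact (hg_cont.mono hIoo).rpow_const (fun r hr => Or.inl (hpos r hr.1 hr.2).ne')
  have hderiv_nonpos : ∀ r ∈ Ioi (0:ℝ), deriv g r ≤ 0 := by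
    intro r hr
    have hdiff : HasDerivAt g (deriv g r) r :=
      ((hsmooth.differentiableOn (by simp)).differentiableAt
        (isOpen_Ioi.mem_nhds hr)).hasDerivAt
    have hslope : Tendsto (slope g r) (nhdsWithin r (Ioi r)) (nhds (deriv g r)) :=
      (hasDerivAt_iff_tendsto_slope.1 hdiff).mono_left
        (nhdsWithin_mono _ (fun y hy => ne_of_gt hy))
    refine le_of_tendsto hslope ?_
    filter_upwards [self_mem_nhdsWithin] with y hy
    have hy' : r < y := hy
    have : g y ≤ g r := hdecr hr (lt_trans hr hy') hy'.le
    rw [slope_def_field]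
    exact div_nonpos_of_nonpos_of_nonneg (by linarith) (by linarith)
  -- FTC inequality on compact subintervals
  have key : ∀ a c : ℝ, 0 < a → a ≤ c → c < b →
      p * ∫ r in a..c, w1 r ≤ a ^ (N:ℝ) * g a ^ p + (N:ℝ) * ∫ r in a..c, w2 r := by
    intro a c ha hac hcb
    have hsub : Icc a c ⊆ Ioo (0:ℝ) b :=
      fun r hr => ⟨lt_of_lt_of_le ha hr.1, lt_of_le_of_lt hr.2 hcb⟩
    have huIcc : uIcc a c = Icc a c := uIcc_of_le hac
    have hint1 : IntervalIntegrable w1 volume a c := by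
      apply ContinuousOn.intervalIntegrable; rw [huIcc]; exact hw1_cont.mono hsub
    have hint2 : IntervalIntegrable w2 volume a c := by
      apply ContinuousOn.intervalIntegrable; rw [huIcc]; exact hw2_cont.mono hsub
    have hftc : ∫ r in a..c, ((N:ℝ) * w2 r - p * w1 r) =
        c ^ (N:ℝ) * g c ^ p - a ^ (N:ℝ) * g a ^ p := by
      apply intervalIntegral.integral_eq_sub_of_hasDerivAt
      · intro r hr
        rw [huIcc] at hr
        have hr' := hsub hr
        have hgd : HasDerivAt g (deriv g r) r :=
          ((hsmooth.differentiableOn (by simp)).differentiableAt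
            (isOpen_Ioi.mem_nhds hr'.1)).hasDerivAt
        have h1 : HasDerivAt (fun s : ℝ => s ^ (N:ℝ)) ((N:ℝ) * r ^ ((N:ℝ)-1)) r :=
          Real.hasDerivAt_rpow_const (Or.inl hr'.1.ne')
        have h2 : HasDerivAt (fun s => g s ^ p) (deriv g r * p * g r ^ (p-1)) r :=
          hgd.rpow_const (Or.inl (hpos r hr'.1 hr'.2).ne')
        have h3 : HasDerivAt (fun s => s ^ (N:ℝ) * g s ^ p) _ r := h1.mul h2
        apply h3.congr_deriv
        have habs : |deriv g r| = -(deriv g r) := abs_of_nonpos (hderiv_nonpos r hr'.1)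
        simp only [hw1, hw2]
        rw [habs]; ring
      · exact (hint2.const_mul _).sub (hint1.const_mul _)
    rw [intervalIntegral.integral_sub (hint2.const_mul _) (hint1.const_mul _),
      intervalIntegral.integral_const_mul, intervalIntegral.integral_const_mul] at hftc
    have hc0 : 0 ≤ c ^ (N:ℝ) * g c ^ p := by
      apply mul_nonneg (Real.rpow_nonneg (lt_of_lt_of_le ha hac).le _)
      exact Real.rpow_nonneg (hnonneg c (lt_of_lt_of_le ha hac)) _
    linarith
  -- lintegral over Ioo equals ofReal of interval integral
  have conv : ∀ (w : ℝ → ℝ), ContinuousOn w (Ioo (0:ℝ) b) → (∀ r ∈ Ioo (0:ℝ) b, 0 ≤ w r) →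
      ∀ a c : ℝ, 0 < a → a ≤ c → c < b →
      (∫⁻ r in Ioo a c, ENNReal.ofReal (w r)) = ENNReal.ofReal (∫ r in a..c, w r) := by
    intro w hw hwnn a c ha hac hcb
    have hsub : Icc a c ⊆ Ioo (0:ℝ) b :=
      fun r hr => ⟨lt_of_lt_of_le ha hr.1, lt_of_le_of_lt hr.2 hcb⟩
    have hInt : IntegrableOn w (Ioc a c) volume :=
      (ContinuousOn.integrableOn_Icc (hw.mono hsub)).mono_set Ioc_subset_Icc_self
    rw [intervalIntegral.integral_of_le hac,
      ofReal_integral_eq_lintegral_ofReal hInt ?_,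
      Measure.restrict_congr_set Ioo_ae_eq_Ioc]
    filter_upwards [ae_restrict_mem measurableSet_Ioc] with r hr
    exact hwnn r (hsub (Ioc_subset_Icc_self hr))
  have hw1_nn : ∀ r ∈ Ioo (0:ℝ) b, 0 ≤ w1 r := by
    intro r hr
    apply mul_nonneg (Real.rpow_nonneg hr.1.le _)
    exact mul_nonneg (abs_nonneg _) (Real.rpow_nonneg (hnonneg r hr.1) _)
  have hw2_nn : ∀ r ∈ Ioo (0:ℝ) b, 0 ≤ w2 r := fun r hr =>
    mul_nonneg (Real.rpow_nonneg hr.1.le _) (Real.rpow_nonneg (hnonneg r hr.1) _)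
  -- sequences
  set u : ℕ → ℝ := fun n => b / (n+3) with hu
  set v : ℕ → ℝ := fun n => b - b / (n+3) with hv
  have hu_pos : ∀ n, 0 < u n := by
    intro n
    have hn3 : (0:ℝ) < (n:ℝ) + 3 := by
      have := Nat.cast_nonneg (α := ℝ) n; linarith
    exact div_pos hb hn3
  have hu_le_v : ∀ n, u n ≤ v n := by
    intro n
    have h3 : (3:ℝ) ≤ (n:ℝ) + 3 := by
      have := Nat.cast_nonneg (α := ℝ) n; linarith
    have h4 : b / ((n:ℝ)+3) ≤ b / 3 :=
      div_le_div_of_nonneg_left hb.le (by norm_num) h3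
    simp only [hu, hv]
    push_cast
    linarith
  have hv_lt : ∀ n, v n < b := by
    intro n
    have := hu_pos n
    simp only [hv] at *; push_cast at *; linarith
  have hS_sub : ∀ n, Ioo (u n) (v n) ⊆ Ioo (0:ℝ) b :=
    fun n r hr => ⟨lt_trans (hu_pos n) hr.1, lt_trans hr.2 (hv_lt n)⟩
  have haem1 : AEMeasurable (fun r => ENNReal.ofReal (w1 r)) (volume.restrict (Ioo (0:ℝ) b)) :=
    (hw1_cont.aemeasurable measurableSet_Ioo).ennreal_ofReal
  -- D as supremum
  have hSmono : Monotone (fun n => Ioo (u n) (v n)) := by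
    intro m n hmn
    have hmn' : (m:ℝ) ≤ n := Nat.cast_le.2 hmn
    have hum : u n ≤ u m := by
      apply div_le_div_of_nonneg_left hb.le (by positivity)
      push_cast; linarith
    have hvm : v m ≤ v n := by simp only [hv]; push_cast; linarith [hum]
    exact Ioo_subset_Ioo hum hvm
  have hUnion : (⋃ n, Ioo (u n) (v n)) = Ioo (0:ℝ) b := by
    apply Subset.antisymm (iUnion_subset hS_sub)
    intro x hx
    have hx1 : 0 < x := hx.1
    have hx2 : x < b := hx.2
    obtain ⟨n, hn⟩ := exists_nat_gt (max (b/x) (b/(b-x)))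
    refine mem_iUnion.2 ⟨n, ?_, ?_⟩
    · have h1 : b / x < (n:ℝ) + 3 := lt_of_le_of_lt (le_max_left _ _) (by push_cast; linarith)
      rw [div_lt_iff₀ hx1] at h1
      rw [hu]
      have hn3 : (0:ℝ) < (n:ℝ) + 3 := by
        have := Nat.cast_nonneg (α := ℝ) n; linarith
      rw [div_lt_iff₀ hn3]
      nlinarith
    · have h2 : b / (b - x) < (n:ℝ) + 3 := lt_of_le_of_lt (le_max_right _ _) (by push_cast; linarith)
      rw [div_lt_iff₀ (by linarith)] at h2
      have h5 : b / ((n:ℝ)+3) < b - x := by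
        have hn3 : (0:ℝ) < (n:ℝ) + 3 := by
          have := Nat.cast_nonneg (α := ℝ) n; linarith
        rw [div_lt_iff₀ hn3]; nlinarith
      simp only [hv]; push_cast; linarith
  have hDsup : D = ⨆ n, ∫⁻ r in Ioo (u n) (v n), ENNReal.ofReal (w1 r) := by
    have hind : ∀ n, (∫⁻ r in Ioo (u n) (v n), ENNReal.ofReal (w1 r)) =
        ∫⁻ r in Ioo (0:ℝ) b,
          (Ioo (u n) (v n)).indicator (fun r => ENNReal.ofReal (w1 r)) r := by
      intro n
      rw [lintegral_indicator measurableSet_Ioo, Measure.restrict_restrict measurableSet_Ioo,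
        inter_eq_left.2 (hS_sub n)]
    simp_rw [hind]
    rw [← lintegral_iSup' (fun n => haem1.indicator measurableSet_Ioo) ?_]
    · apply setLIntegral_congr_fun measurableSet_Ioo
      intro x hx
      apply le_antisymm
      · obtain ⟨n, hn⟩ := mem_iUnion.1 (hUnion ▸ hx)
        exact le_trans (le_of_eq (Set.indicator_of_mem hn (fun r => ENNReal.ofReal (w1 r))).symm) (le_iSup (fun n => (Ioo (u n) (v n)).indicator (fun r => ENNReal.ofReal (w1 r)) x) n)
      · exact iSup_le fun n => indicator_le_self _ _ x
    · filter_upwards with x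
      intro m n hmn
      exact Set.indicator_le_indicator_of_subset (hSmono hmn) (fun _ => by simp) x
  -- limit inequality : p * D ≤ N * B
  have hmain : ENNReal.ofReal p * D ≤ ENNReal.ofReal (N:ℝ) * B := by
    have hDn_mono : Monotone
        (fun n => ∫⁻ r in Ioo (u n) (v n), ENNReal.ofReal (w1 r)) :=
      fun m n hmn => lintegral_mono_set (hSmono hmn)
    have htendD : Tendsto (fun n => ∫⁻ r in Ioo (u n) (v n), ENNReal.ofReal (w1 r))
        atTop (nhds D) := by
      rw [hDsup]; exact tendsto_atTop_iSup hDn_mono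
    have hu_tend : Tendsto u atTop (nhdsWithin 0 (Ioi 0)) := by
      rw [tendsto_nhdsWithin_iff]
      constructor
      · have h1 : Tendsto (fun n : ℕ => ((n:ℝ)+3)) atTop atTop :=
          tendsto_atTop_add_const_right _ 3 tendsto_natCast_atTop_atTop
        simpa [hu] using Tendsto.div_atTop (tendsto_const_nhds (x := b)) h1
      · exact Eventually.of_forall (fun n => hu_pos n)
    have hPhi : Tendsto (fun n => ENNReal.ofReal ((u n) ^ (N:ℝ) * g (u n) ^ p))
        atTop (nhds 0) := by
      have h2 := hlim.comp hu_tend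
      have h3 := ENNReal.tendsto_ofReal h2
      simpa [Function.comp] using h3
    have hper : ∀ n, ENNReal.ofReal p * (∫⁻ r in Ioo (u n) (v n), ENNReal.ofReal (w1 r))
        ≤ ENNReal.ofReal ((u n) ^ (N:ℝ) * g (u n) ^ p) + ENNReal.ofReal (N:ℝ) * B := by
      intro n
      rw [conv w1 hw1_cont hw1_nn _ _ (hu_pos n) (hu_le_v n) (hv_lt n),
        ← ENNReal.ofReal_mul hp.le]
      calc ENNReal.ofReal (p * ∫ r in (u n)..(v n), w1 r)
          ≤ ENNReal.ofReal ((u n) ^ (N:ℝ) * g (u n) ^ p +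
              (N:ℝ) * ∫ r in (u n)..(v n), w2 r) :=
            ENNReal.ofReal_le_ofReal (key _ _ (hu_pos n) (hu_le_v n) (hv_lt n))
        _ ≤ ENNReal.ofReal ((u n) ^ (N:ℝ) * g (u n) ^ p) +
              ENNReal.ofReal ((N:ℝ) * ∫ r in (u n)..(v n), w2 r) := ENNReal.ofReal_add_le
        _ ≤ ENNReal.ofReal ((u n) ^ (N:ℝ) * g (u n) ^ p) + ENNReal.ofReal (N:ℝ) * B := by
            apply add_le_add_right
            rw [ENNReal.ofReal_mul (Nat.cast_nonneg N),
              ← conv w2 hw2_cont hw2_nn _ _ (hu_pos n) (hu_le_v n) (hv_lt n)]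
            exact mul_le_mul_right (lintegral_mono_set (hS_sub n)) _
    have hlhs : Tendsto (fun n => ENNReal.ofReal p *
        (∫⁻ r in Ioo (u n) (v n), ENNReal.ofReal (w1 r))) atTop
        (nhds (ENNReal.ofReal p * D)) :=
      ENNReal.Tendsto.const_mul htendD (Or.inr ENNReal.ofReal_ne_top)
    have hrhs : Tendsto (fun n => ENNReal.ofReal ((u n) ^ (N:ℝ) * g (u n) ^ p) +
        ENNReal.ofReal (N:ℝ) * B) atTop (nhds (0 + ENNReal.ofReal (N:ℝ) * B)) :=
      hPhi.add tendsto_const_nhds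
    have := le_of_tendsto_of_tendsto' hlhs hrhs hper
    rwa [zero_add] at this
  -- D ≤ (N/p) * B
  have hp0 : ENNReal.ofReal p ≠ 0 := by
    simp [ENNReal.ofReal_eq_zero, not_le, hp]
  have hD_le : D ≤ ENNReal.ofReal ((N:ℝ)/p) * B := by
    calc D = (ENNReal.ofReal p)⁻¹ * (ENNReal.ofReal p * D) := by
          rw [← mul_assoc, ENNReal.inv_mul_cancel hp0 ENNReal.ofReal_ne_top, one_mul]
      _ ≤ (ENNReal.ofReal p)⁻¹ * (ENNReal.ofReal (N:ℝ) * B) := mul_le_mul_right hmain _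
      _ = ENNReal.ofReal ((N:ℝ)/p) * B := by
          rw [← mul_assoc, ENNReal.ofReal_div_of_pos hp, ENNReal.div_eq_inv_mul]
  -- Hölder
  have hpq : Real.HolderConjugate (1/p) (1/(1-p)) := by
    constructor
    · rw [one_div, one_div, inv_inv, inv_inv]; ring
    · exact one_div_pos.2 hp
    · exact one_div_pos.2 (by linarith)
  set F : ℝ → ℝ≥0∞ := fun r => ENNReal.ofReal (w1 r) ^ p with hF
  set Gf : ℝ → ℝ≥0∞ := fun r => ENNReal.ofReal (w2 r) ^ (1-p) with hGf
  have haem2 : AEMeasurable (fun r => ENNReal.ofReal (w2 r)) (volume.restrict (Ioo (0:ℝ) b)) :=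
    (hw2_cont.aemeasurable measurableSet_Ioo).ennreal_ofReal
  have hFaem : AEMeasurable F (volume.restrict (Ioo (0:ℝ) b)) := haem1.pow_const _
  have hGaem : AEMeasurable Gf (volume.restrict (Ioo (0:ℝ) b)) := haem2.pow_const _
  have hpoint : ∀ r ∈ Ioo (0:ℝ) b,
      ENNReal.ofReal (r ^ ((N:ℝ)-1) * (r * |deriv g r|) ^ p) = (F * Gf) r := by
    intro r hr
    have hr0 : (0:ℝ) < r := hr.1
    have hgr : (0:ℝ) < g r := hpos r hr.1 hr.2
    have hreal : r ^ ((N:ℝ)-1) * (r * |deriv g r|) ^ p = w1 r ^ p * w2 r ^ (1-p) := by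
      by_cases hd : deriv g r = 0
      · simp [hw1, hw2, hd, Real.zero_rpow hp.ne', Real.mul_rpow, hr0.le]
      · have hdpos : 0 < |deriv g r| := abs_pos.2 hd
        have hw1pos : 0 < w1 r :=
          mul_pos (Real.rpow_pos_of_pos hr0 _)
            (mul_pos hdpos (Real.rpow_pos_of_pos hgr _))
        have hw2pos : 0 < w2 r :=
          mul_pos (Real.rpow_pos_of_pos hr0 _) (Real.rpow_pos_of_pos hgr _)
        have hL : 0 < r ^ ((N:ℝ)-1) * (r * |deriv g r|) ^ p :=
          mul_pos (Real.rpow_pos_of_pos hr0 _)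
            (Real.rpow_pos_of_pos (mul_pos hr0 hdpos) _)
        have hR : 0 < w1 r ^ p * w2 r ^ (1-p) :=
          mul_pos (Real.rpow_pos_of_pos hw1pos _) (Real.rpow_pos_of_pos hw2pos _)
        apply Real.log_injOn_pos (mem_Ioi.2 hL) (mem_Ioi.2 hR)
        rw [Real.log_mul (ne_of_gt (Real.rpow_pos_of_pos hr0 _))
            (ne_of_gt (Real.rpow_pos_of_pos (mul_pos hr0 hdpos) _)),
          Real.log_rpow hr0, Real.log_rpow (mul_pos hr0 hdpos),
          Real.log_mul hr0.ne' hdpos.ne',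
          Real.log_mul (ne_of_gt (Real.rpow_pos_of_pos hw1pos _))
            (ne_of_gt (Real.rpow_pos_of_pos hw2pos _)),
          Real.log_rpow hw1pos, Real.log_rpow hw2pos]
        simp only [hw1, hw2]
        rw [Real.log_mul (ne_of_gt (Real.rpow_pos_of_pos hr0 _))
            (ne_of_gt (mul_pos hdpos (Real.rpow_pos_of_pos hgr _))),
          Real.log_mul hdpos.ne' (ne_of_gt (Real.rpow_pos_of_pos hgr _)),
          Real.log_rpow hr0, Real.log_rpow hgr,
          Real.log_mul (ne_of_gt (Real.rpow_pos_of_pos hr0 _))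
            (ne_of_gt (Real.rpow_pos_of_pos hgr _)),
          Real.log_rpow hr0, Real.log_rpow hgr]
        ring
    rw [hreal]
    simp only [Pi.mul_apply, hF, hGf]
    rw [ENNReal.ofReal_mul (Real.rpow_nonneg (hw1_nn r hr) _),
      ← ENNReal.ofReal_rpow_of_nonneg (hw1_nn r hr) hp.le,
      ← ENNReal.ofReal_rpow_of_nonneg (hw2_nn r hr) (by linarith)]
  have hA_eq : (∫⁻ r in Ioo (0:ℝ) b, ENNReal.ofReal (r ^ ((N:ℝ)-1) * (r * |deriv g r|) ^ p))
      = ∫⁻ r in Ioo (0:ℝ) b, (F * Gf) r := by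
    apply setLIntegral_congr_fun measurableSet_Ioo
    intro r hr
    exact hpoint r hr
  have holder := ENNReal.lintegral_mul_le_Lp_mul_Lq (volume.restrict (Ioo (0:ℝ) b)) hpq hFaem hGaem
  have hF1 : ∀ r : ℝ, F r ^ (1/p) = ENNReal.ofReal (w1 r) := by
    intro r
    rw [hF, ← ENNReal.rpow_mul, mul_one_div_cancel hp.ne', ENNReal.rpow_one]
  have hG1 : ∀ r : ℝ, Gf r ^ (1/(1-p)) = ENNReal.ofReal (w2 r) := by
    intro r
    rw [hGf, ← ENNReal.rpow_mul, mul_one_div_cancel (by linarith : 1 - p ≠ 0), ENNReal.rpow_one]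
  simp_rw [hF1, hG1, one_div_one_div] at holder
  calc (∫⁻ r in Ioo (0:ℝ) b, ENNReal.ofReal (r ^ ((N:ℝ)-1) * (r * |deriv g r|) ^ p))
      = ∫⁻ r in Ioo (0:ℝ) b, (F * Gf) r := hA_eq
    _ ≤ D ^ p * B ^ (1-p) := holder
    _ ≤ (ENNReal.ofReal ((N:ℝ)/p) * B) ^ p * B ^ (1-p) := by
        exact mul_le_mul_left (ENNReal.rpow_le_rpow hD_le hp.le) _
    _ = ENNReal.ofReal ((N:ℝ)/p) ^ p * (B ^ p * B ^ (1-p)) := by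
        rw [ENNReal.mul_rpow_of_nonneg _ _ hp.le, mul_assoc]
    _ = ENNReal.ofReal ((N:ℝ)/p) ^ p * B := by
        rw [← ENNReal.rpow_add _ _ hB0 hBtop]
        norm_num

end OneDim

/-- Reverse L^p-Sobolev inequality on ℝ^N for radial, radially decreasing
functions `f(x) = g(|x|)`, with the Euler operator `𝔼f(x) = |x| g'(|x|)`. -/
theorem reverse_Lp_sobolev
    (N : ℕ) (hN : 1 ≤ N) (p : ℝ) (hp : 0 < p) (hp1 : p < 1)
    (g : ℝ → ℝ) (b : ℝ) (hb : 0 < b)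
    (hsmooth : ContDiffOn ℝ (⊤ : ℕ∞) g (Set.Ioi 0))
    (hnonneg : ∀ r, 0 < r → 0 ≤ g r)
    (hdecr : AntitoneOn g (Set.Ioi 0))
    (hvanish : ∀ r, b ≤ r → g r = 0)
    (hpos : ∀ r, 0 < r → r < b → 0 < g r)
    (hlim : Tendsto (fun r : ℝ => r ^ (N : ℝ) * g r ^ p)
      (nhdsWithin 0 (Set.Ioi 0)) (nhds 0))
    (hIpos : 0 < ∫⁻ x : EuclideanSpace ℝ (Fin N),
        ENNReal.ofReal (g ‖x‖ ^ p) ∂volume)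
    (hIfin : (∫⁻ x : EuclideanSpace ℝ (Fin N),
        ENNReal.ofReal (g ‖x‖ ^ p) ∂volume) < ⊤) :
    ENNReal.ofReal (p / (N : ℝ)) *
        (∫⁻ x : EuclideanSpace ℝ (Fin N),
          ENNReal.ofReal ((‖x‖ * |deriv g ‖x‖|) ^ p) ∂volume) ^ (1 / p) ≤
      (∫⁻ x : EuclideanSpace ℝ (Fin N),
        ENNReal.ofReal (g ‖x‖ ^ p) ∂volume) ^ (1 / p) := by
  have hN0 : (0:ℝ) < (N:ℝ) := by exact_mod_cast hN
  haveI : Nontrivial (EuclideanSpace ℝ (Fin N)) := by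
    exact Module.nontrivial_of_finrank_pos (R := ℝ) (by rw [finrank_euclideanSpace_fin]; omega)
  set μ : Measure (EuclideanSpace ℝ (Fin N)) := volume with hμ
  set c : ℝ≥0∞ := μ.toSphere univ with hc
  have hdim : dim (EuclideanSpace ℝ (Fin N)) = N := finrank_euclideanSpace_fin
  have hc0 : c ≠ 0 := by
    rw [hc, Measure.toSphere_apply_univ]
    apply mul_ne_zero
    · rw [hdim]
      exact_mod_cast Nat.cast_ne_zero.2 (by omega : N ≠ 0)
    · exact (measure_ball_pos μ 0 one_pos).ne'
  have hcT : c ≠ ⊤ := by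
    rw [hc, Measure.toSphere_apply_univ]
    exact ENNReal.mul_ne_top (ENNReal.natCast_ne_top _) measure_ball_lt_top.ne
  have hg_cont : ContinuousOn g (Ioi (0:ℝ)) := hsmooth.continuousOn
  set G : ℝ → ℝ := fun r => if h : r ∈ Ioi (0:ℝ) then g r else 0 with hG
  have hGmeas : Measurable G :=
    Measurable.dite (continuousOn_iff_continuous_restrict.1 hg_cont).measurable
      measurable_const measurableSet_Ioi
  have hGg : ∀ r : ℝ, 0 < r → G r = g r := fun r hr => dif_pos (mem_Ioi.2 hr)
  have hfA : Measurable fun r : ℝ => ENNReal.ofReal ((r * |deriv g r|) ^ p) := by fun_prop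
  have hfB : Measurable fun r : ℝ => ENNReal.ofReal (G r ^ p) := by fun_prop
  have hA : (∫⁻ x : EuclideanSpace ℝ (Fin N),
      ENNReal.ofReal ((‖x‖ * |deriv g ‖x‖|) ^ p) ∂volume) =
      c * ∫⁻ r in Ioi (0:ℝ), ENNReal.ofReal (r ^ (N - 1)) *
        ENNReal.ofReal ((r * |deriv g r|) ^ p) := by
    have := lintegral_fun_norm_addHaar' μ _ hfA
    rw [hdim] at this
    exact this
  have hgG : (∫⁻ x : EuclideanSpace ℝ (Fin N), ENNReal.ofReal (g ‖x‖ ^ p) ∂volume) =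
      ∫⁻ x, ENNReal.ofReal (G ‖x‖ ^ p) ∂μ := by
    apply lintegral_congr_ae
    have h0 : μ ({0} : Set (EuclideanSpace ℝ (Fin N))) = 0 := measure_singleton _
    filter_upwards [compl_mem_ae_iff.2 h0] with x hx
    have hx0 : x ≠ (0 : EuclideanSpace ℝ (Fin N)) := hx
    rw [hGg _ (norm_pos_iff.2 hx0)]
  have hB : (∫⁻ x, ENNReal.ofReal (G ‖x‖ ^ p) ∂μ) =
      c * ∫⁻ r in Ioi (0:ℝ), ENNReal.ofReal (r ^ (N - 1)) *
        ENNReal.ofReal (G r ^ p) := by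
    have := lintegral_fun_norm_addHaar' μ _ hfB
    rw [hdim] at this
    exact this
  -- reduction of 1D integrals to  (0, b)
  have hIci : ∀ f : ℝ → ℝ≥0∞, (∀ r, b < r → f r = 0) →
      (∫⁻ r in Ioi (0:ℝ), f r) = ∫⁻ r in Ioo (0:ℝ) b, f r := by
    intro f hf
    have hdisj : Disjoint (Ioo (0:ℝ) b) (Ici b) := by
      rw [disjoint_left]
      intro r hr hr'
      exact absurd hr' (not_le.2 hr.2)
    rw [← Ioo_union_Ici_eq_Ioi hb, lintegral_union measurableSet_Ici hdisj]
    have hz : (∫⁻ r in Ici b, f r) = 0 := by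
      rw [← Measure.restrict_congr_set Ioi_ae_eq_Ici,
        setLIntegral_congr_fun measurableSet_Ioi
          (fun r (hr : r ∈ Ioi b) => hf r hr), lintegral_zero]
    rw [hz, add_zero]
  have hpowcast : ∀ r : ℝ, 0 < r → r ^ (N - 1) = r ^ ((N:ℝ) - 1) := by
    intro r hr
    rw [← Real.rpow_natCast r (N-1), Nat.cast_sub hN, Nat.cast_one]
  have hAred : (∫⁻ r in Ioi (0:ℝ), ENNReal.ofReal (r ^ (N - 1)) *
        ENNReal.ofReal ((r * |deriv g r|) ^ p)) =
      ∫⁻ r in Ioo (0:ℝ) b, ENNReal.ofReal (r ^ ((N:ℝ)-1) * (r * |deriv g r|) ^ p) := by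
    rw [hIci _ ?_]
    · apply setLIntegral_congr_fun measurableSet_Ioo
      intro r hr; dsimp only
      rw [← ENNReal.ofReal_mul (pow_nonneg hr.1.le _), hpowcast r hr.1]
    · intro r hrb
      have hd0 : deriv g r = 0 := by
        have hev : g =ᶠ[nhds r] fun _ => (0:ℝ) := by
          filter_upwards [isOpen_Ioi.mem_nhds hrb] with y hy
          exact hvanish y (le_of_lt hy)
        rw [hev.deriv_eq, deriv_const]
      rw [hd0]
      simp [Real.zero_rpow hp.ne']
  have hBred : (∫⁻ r in Ioi (0:ℝ), ENNReal.ofReal (r ^ (N - 1)) *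
        ENNReal.ofReal (G r ^ p)) =
      ∫⁻ r in Ioo (0:ℝ) b, ENNReal.ofReal (r ^ ((N:ℝ)-1) * g r ^ p) := by
    rw [hIci _ ?_]
    · apply setLIntegral_congr_fun measurableSet_Ioo
      intro r hr; dsimp only
      rw [← ENNReal.ofReal_mul (pow_nonneg hr.1.le _), hpowcast r hr.1, hGg r hr.1]
    · intro r hrb
      have : G r = 0 := by rw [hGg r (lt_trans hb hrb)]; exact hvanish r (le_of_lt hrb)
      rw [this]
      simp [Real.zero_rpow hp.ne']
  set IA : ℝ≥0∞ := ∫⁻ r in Ioo (0:ℝ) b,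
    ENNReal.ofReal (r ^ ((N:ℝ)-1) * (r * |deriv g r|) ^ p) with hIA
  set IB : ℝ≥0∞ := ∫⁻ r in Ioo (0:ℝ) b, ENNReal.ofReal (r ^ ((N:ℝ)-1) * g r ^ p) with hIB
  rw [hgG, hB, hBred] at hIpos hIfin
  have hB0 : IB ≠ 0 := by
    intro h
    rw [h, mul_zero] at hIpos
    exact lt_irrefl 0 hIpos
  have hBtop : IB ≠ ⊤ := by
    intro h
    rw [h, ENNReal.mul_top hc0] at hIfin
    exact lt_irrefl ⊤ hIfin
  have hmain := oneDim hN hp hp1 hb hsmooth hnonneg hdecr hpos hlim hB0 hBtop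
  rw [hA, hAred, hgG, hB, hBred]
  have h1 : c * IA ≤ ENNReal.ofReal ((N:ℝ)/p) ^ p * (c * IB) := by
    calc c * IA ≤ c * (ENNReal.ofReal ((N:ℝ)/p) ^ p * IB) := mul_le_mul_right hmain _
      _ = ENNReal.ofReal ((N:ℝ)/p) ^ p * (c * IB) := by ring
  have h2 : (c * IA) ^ (1/p) ≤ ENNReal.ofReal ((N:ℝ)/p) * (c * IB) ^ (1/p) := by
    calc (c * IA) ^ (1/p) ≤ (ENNReal.ofReal ((N:ℝ)/p) ^ p * (c * IB)) ^ (1/p) :=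
        ENNReal.rpow_le_rpow h1 (by positivity)
      _ = ENNReal.ofReal ((N:ℝ)/p) * (c * IB) ^ (1/p) := by
        rw [ENNReal.mul_rpow_of_nonneg _ _ (by positivity), ← ENNReal.rpow_mul,
          mul_one_div_cancel hp.ne', ENNReal.rpow_one]
  calc ENNReal.ofReal (p/(N:ℝ)) * (c * IA) ^ (1/p)
      ≤ ENNReal.ofReal (p/(N:ℝ)) * (ENNReal.ofReal ((N:ℝ)/p) * (c * IB) ^ (1/p)) :=
        mul_le_mul_right h2 _
    _ = (c * IB) ^ (1/p) := by
        rw [← mul_assoc, ← ENNReal.ofReal_mul (by positivity), div_mul_div_comm,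
          mul_comm p (N:ℝ), div_self (by positivity), ENNReal.ofReal_one, one_mul]
end

section
/- Let N ≥ 1 be an integer, p ∈ (0,1), α, β ∈ ℝ, and set γ = α + β + 1, assuming N > γ. Let g : (0,∞) → [0,∞) be a C^∞ function which is nonincreasing, vanishes on [b,∞) for some b > 0 and is strictly positive on (0,b), and satisfies lim_{r→0⁺} r^{N−γ} g(r)^p = 0, ∫_{ℝ^N} g(|x|)^p |x|^{−γ} dx < ∞, and 0 < ∫_{ℝ^N} g(|x|)^p |x|^{−βp/(p−1)} dx < ∞. Then the radial function f(x) = g(|x|) satisfies the reverse L^p-Caffarelli–Kohn–Nirenberg inequality ∫_{ℝ^N} g(|x|)^p |x|^{−γ} dx ≥ (p/(N−γ)) (∫_{ℝ^N} |g'(|x|)|^p |x|^{−αp} dx)^{1/p} (∫_{ℝ^N} g(|x|)^p |x|^{−βp/(p−1)} dx)^{(p−1)/p}. -/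
open MeasureTheory ENNReal NNReal Filter

lemma polar_lintegral (N : ℕ) (hN : 1 ≤ N) (F : ℝ → ℝ≥0∞) (hF : Measurable F) :
    ∫⁻ x : EuclideanSpace ℝ (Fin N), F ‖x‖ ∂volume
      = (volume : Measure (EuclideanSpace ℝ (Fin N))).toSphere Set.univ
        * ∫⁻ r in Set.Ioi (0:ℝ), ENNReal.ofReal (r ^ (N - 1)) * F r := by
  set E := EuclideanSpace ℝ (Fin N)
  haveI : Nontrivial E := by
    have : 0 < Module.finrank ℝ E := by
      simp [E, finrank_euclideanSpace_fin]; omega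
    exact Module.nontrivial_of_finrank_pos this
  set μ : Measure E := volume
  have hdim : Module.finrank ℝ E = N := finrank_euclideanSpace_fin
  calc ∫⁻ x : E, F ‖x‖ ∂μ
      = ∫⁻ x in ({0}ᶜ : Set E), F ‖x‖ ∂μ := by
        rw [MeasureTheory.restrict_compl_singleton]
    _ = ∫⁻ x : ({0}ᶜ : Set E), F ‖x.1‖ ∂(μ.comap (↑)) :=
        (lintegral_subtype_comap (measurableSet_singleton _).compl _).symm
    _ = ∫⁻ p : Metric.sphere (0:E) 1 × Set.Ioi (0:ℝ), F p.2 ∂(μ.toSphere.prod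
          (Measure.volumeIoiPow (Module.finrank ℝ E - 1))) := by
        rw [← μ.measurePreserving_homeomorphUnitSphereProd.lintegral_comp_emb
          (Homeomorph.measurableEmbedding _) (fun p => F p.2.1)]
        exact lintegral_congr fun x => by
          rw [homeomorphUnitSphereProd_apply_snd_coe]
    _ = μ.toSphere Set.univ * ∫⁻ r : Set.Ioi (0:ℝ), F r
          ∂(Measure.volumeIoiPow (Module.finrank ℝ E - 1)) := by
        have hm : AEMeasurable (fun p : Metric.sphere (0:E) 1 × Set.Ioi (0:ℝ) => F p.2.1)
            (μ.toSphere.prod (Measure.volumeIoiPow (Module.finrank ℝ E - 1))) := by fun_prop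
        rw [lintegral_prod _ hm]
        simp [lintegral_const, mul_comm]
    _ = μ.toSphere Set.univ * ∫⁻ r in Set.Ioi (0:ℝ), ENNReal.ofReal (r ^ (N - 1)) * F r := by
      rw [Measure.volumeIoiPow, lintegral_withDensity_eq_lintegral_mul _
        (by fun_prop) (show Measurable (fun r : Set.Ioi (0:ℝ) => F r.1) by fun_prop),
        ← lintegral_subtype_comap measurableSet_Ioi
          (fun r : ℝ => ENNReal.ofReal (r ^ (N - 1)) * F r), hdim]
      rfl

/-- Reverse L^p-Caffarelli–Kohn–Nirenberg inequality on ℝ^N for radial,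
radially decreasing functions `f(x) = g(|x|)`, with `γ = α + β + 1 < N`. -/
theorem reverse_Lp_caffarelli_kohn_nirenberg
    (N : ℕ) (hN : 1 ≤ N) (p α β γ : ℝ) (hp : 0 < p) (hp1 : p < 1)
    (hγdef : γ = α + β + 1) (hγ : γ < N)
    (g : ℝ → ℝ) (b : ℝ) (hb : 0 < b)
    (hsmooth : ContDiffOn ℝ (⊤ : ℕ∞) g (Set.Ioi 0))
    (hnonneg : ∀ r, 0 < r → 0 ≤ g r)
    (hdecr : AntitoneOn g (Set.Ioi 0))
    (hvanish : ∀ r, b ≤ r → g r = 0)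
    (hpos : ∀ r, 0 < r → r < b → 0 < g r)
    (hlim : Tendsto (fun r : ℝ => r ^ ((N : ℝ) - γ) * g r ^ p)
      (nhdsWithin 0 (Set.Ioi 0)) (nhds 0))
    (hIfin : (∫⁻ x : EuclideanSpace ℝ (Fin N),
        ENNReal.ofReal (g ‖x‖ ^ p * ‖x‖ ^ (-γ)) ∂volume) < ⊤)
    (hJpos : 0 < ∫⁻ x : EuclideanSpace ℝ (Fin N),
        ENNReal.ofReal (g ‖x‖ ^ p * ‖x‖ ^ (-(β * p / (p - 1)))) ∂volume)
    (hJfin : (∫⁻ x : EuclideanSpace ℝ (Fin N),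
        ENNReal.ofReal (g ‖x‖ ^ p * ‖x‖ ^ (-(β * p / (p - 1)))) ∂volume) < ⊤) :
    ENNReal.ofReal (p / ((N : ℝ) - γ)) *
        (∫⁻ x : EuclideanSpace ℝ (Fin N),
          ENNReal.ofReal (|deriv g ‖x‖| ^ p * ‖x‖ ^ (-(α * p))) ∂volume) ^ (1 / p) *
        (∫⁻ x : EuclideanSpace ℝ (Fin N),
          ENNReal.ofReal (g ‖x‖ ^ p * ‖x‖ ^ (-(β * p / (p - 1)))) ∂volume) ^ ((p - 1) / p) ≤
      ∫⁻ x : EuclideanSpace ℝ (Fin N),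
        ENNReal.ofReal (g ‖x‖ ^ p * ‖x‖ ^ (-γ)) ∂volume := by
  classical
  set E := EuclideanSpace ℝ (Fin N) with hE
  haveI : Nontrivial E := by
    have : 0 < Module.finrank ℝ E := by simp [E, finrank_euclideanSpace_fin]; omega
    exact Module.nontrivial_of_finrank_pos this
  have hNγ : (0:ℝ) < (N:ℝ) - γ := by linarith
  have hdim : Module.finrank ℝ E = N := finrank_euclideanSpace_fin
  have hp1' : p - 1 < 0 := by linarith
  -- globally measurable modification of g
  set G : ℝ → ℝ := (Set.Ioi (0:ℝ)).piecewise g (fun _ => 0) with hGdef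
  have hGmeas : Measurable G :=
    ContinuousOn.measurable_piecewise hsmooth.continuousOn continuousOn_const measurableSet_Ioi
  have hGeq : ∀ r : ℝ, 0 < r → G r = g r := fun r hr => Set.piecewise_eq_of_mem _ _ _ hr
  have hGnonneg : ∀ r, 0 ≤ G r := by
    intro r
    rw [hGdef]
    by_cases hr : r ∈ Set.Ioi (0:ℝ)
    · rw [Set.piecewise_eq_of_mem _ _ _ hr]; exact hnonneg r hr
    · rw [Set.piecewise_eq_of_notMem _ _ _ hr]
  -- continuity of g and deriv g on Ioi 0
  have hgcont : ContinuousOn g (Set.Ioi 0) := hsmooth.continuousOn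
  have hdcont : ContinuousOn (deriv g) (Set.Ioi 0) :=
    hsmooth.continuousOn_deriv_of_isOpen isOpen_Ioi (by simp)
  have hgdiff : ∀ r : ℝ, 0 < r → HasDerivAt g (deriv g r) r := by
    intro r hr
    exact ((hsmooth.contDiffAt (isOpen_Ioi.mem_nhds hr)).differentiableAt (by simp)).hasDerivAt
  -- deriv g is nonpositive on Ioi 0
  have hderiv_nonpos : ∀ r : ℝ, 0 < r → deriv g r ≤ 0 := by
    intro r hr
    have ht : Tendsto (slope g r) (nhdsWithin r (Set.Ioi r)) (nhds (deriv g r)) :=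
      (hasDerivAt_iff_tendsto_slope.1 (hgdiff r hr)).mono_left
        (nhdsWithin_mono _ (fun y hy => Set.mem_compl_singleton_iff.2 (ne_of_gt hy)))
    refine le_of_tendsto ht ?_
    filter_upwards [self_mem_nhdsWithin] with y hy
    have hgy : g y ≤ g r := hdecr (Set.mem_Ioi.2 hr) (Set.mem_Ioi.2 (hr.trans hy)) hy.le
    rw [slope_def_field]
    exact div_nonpos_of_nonpos_of_nonneg (by linarith) (by simp [sub_nonneg, (Set.mem_Ioi.1 hy).le])
  -- deriv g vanishes beyond b
  have hderiv0 : ∀ r : ℝ, b < r → deriv g r = 0 := by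
    intro r hr
    have hev : g =ᶠ[nhds r] (fun _ => (0:ℝ)) := by
      filter_upwards [Ioi_mem_nhds hr] with y hy
      exact hvanish y hy.le
    rw [hev.deriv_eq]
    exact deriv_const r 0
  -- 1D integrands
  set Ifun : ℝ → ℝ≥0∞ := fun r => ENNReal.ofReal (G r ^ p * r ^ ((N:ℝ) - 1 - γ)) with hIfun
  set Afun : ℝ → ℝ≥0∞ := fun r => ENNReal.ofReal (|deriv g r| ^ p * r ^ ((N:ℝ) - 1 - α * p))
    with hAfun
  set Jfun : ℝ → ℝ≥0∞ := fun r => ENNReal.ofReal (G r ^ p * r ^ ((N:ℝ) - 1 - β * p / (p - 1)))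
    with hJfun
  set Kfun : ℝ → ℝ≥0∞ := fun r => ENNReal.ofReal (G r ^ (p - 1) * |deriv g r| * r ^ ((N:ℝ) - γ))
    with hKfun
  have hImeas : Measurable Ifun := by fun_prop
  have hAmeas : Measurable Afun := by fun_prop
  have hJmeas : Measurable Jfun := by fun_prop
  have hKmeas : Measurable Kfun := by fun_prop
  set c : ℝ≥0∞ := (volume : Measure E).toSphere Set.univ with hc
  have hc0 : c ≠ 0 := by
    rw [hc, Measure.toSphere_apply_univ]
    refine mul_ne_zero ?_ (Metric.measure_ball_pos volume (0:E) one_pos).ne'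
    rw [hdim]
    exact Nat.cast_ne_zero.mpr (by omega)
  have hcT : c ≠ ⊤ := by
    rw [hc, Measure.toSphere_apply_univ]
    exact ENNReal.mul_ne_top (ENNReal.natCast_ne_top _) measure_ball_lt_top.ne
  -- polar coordinate identities
  have hae0 : ∀ᵐ x : E ∂volume, x ≠ 0 := by
    refine ae_iff.2 ?_
    have h0 : {x : E | ¬ x ≠ 0} = {(0:E)} := by ext x; simp
    rw [h0]
    exact measure_singleton _
  have hstep : ∀ (F : ℝ → ℝ) (e : ℝ), Measurable (fun r : ℝ => ENNReal.ofReal (F r * r ^ e)) →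
      (∀ r, 0 ≤ F r) →
      ∫⁻ x : E, ENNReal.ofReal (F ‖x‖ * ‖x‖ ^ e) ∂volume
        = c * ∫⁻ r in Set.Ioi (0:ℝ), ENNReal.ofReal (F r * r ^ ((N:ℝ) - 1 + e)) := by
    intro F e hFm hF0
    rw [polar_lintegral N hN _ hFm, hc]
    congr 1
    refine setLIntegral_congr_fun measurableSet_Ioi (fun r hr => ?_)
    have hr' : (0:ℝ) < r := hr
    rw [← ENNReal.ofReal_mul (by positivity)]
    congr 1
    have hnat : (r:ℝ) ^ (N-1) = r ^ ((N:ℝ)-1) := by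
      rw [← Real.rpow_natCast r (N-1), Nat.cast_sub hN, Nat.cast_one]
    rw [hnat, Real.rpow_add hr']
    ring
  have hIrel : (∫⁻ x : E, ENNReal.ofReal (g ‖x‖ ^ p * ‖x‖ ^ (-γ)) ∂volume)
      = c * ∫⁻ r in Set.Ioi (0:ℝ), Ifun r := by
    have h1 : (∫⁻ x : E, ENNReal.ofReal (g ‖x‖ ^ p * ‖x‖ ^ (-γ)) ∂volume)
        = ∫⁻ x : E, ENNReal.ofReal (G ‖x‖ ^ p * ‖x‖ ^ (-γ)) ∂volume := by
      refine lintegral_congr_ae ?_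
      filter_upwards [hae0] with x hx
      rw [hGeq _ (norm_pos_iff.2 hx)]
    rw [h1, hstep (fun r => G r ^ p) (-γ) (by fun_prop)
      (fun r => Real.rpow_nonneg (hGnonneg r) p)]
    congr 1
  have hJrel : (∫⁻ x : E, ENNReal.ofReal (g ‖x‖ ^ p * ‖x‖ ^ (-(β * p / (p - 1)))) ∂volume)
      = c * ∫⁻ r in Set.Ioi (0:ℝ), Jfun r := by
    have h1 : (∫⁻ x : E, ENNReal.ofReal (g ‖x‖ ^ p * ‖x‖ ^ (-(β * p / (p - 1)))) ∂volume)
        = ∫⁻ x : E, ENNReal.ofReal (G ‖x‖ ^ p * ‖x‖ ^ (-(β * p / (p - 1)))) ∂volume := by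
      refine lintegral_congr_ae ?_
      filter_upwards [hae0] with x hx
      rw [hGeq _ (norm_pos_iff.2 hx)]
    rw [h1, hstep (fun r => G r ^ p) (-(β * p / (p - 1))) (by fun_prop)
      (fun r => Real.rpow_nonneg (hGnonneg r) p)]
    congr 1
  have hArel : (∫⁻ x : E, ENNReal.ofReal (|deriv g ‖x‖| ^ p * ‖x‖ ^ (-(α * p))) ∂volume)
      = c * ∫⁻ r in Set.Ioi (0:ℝ), Afun r := by
    rw [hstep (fun r => |deriv g r| ^ p) (-(α * p)) (by fun_prop)
      (fun r => Real.rpow_nonneg (abs_nonneg _) p)]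
    congr 1
  -- restriction to (0, b)
  have hres : ∀ f : ℝ → ℝ≥0∞, (∀ r, b < r → f r = 0) →
      ∫⁻ r in Set.Ioi (0:ℝ), f r = ∫⁻ r in Set.Ioo 0 b, f r := by
    intro f hf
    rw [← Set.Ioo_union_Ici_eq_Ioi hb, lintegral_union measurableSet_Ici
      (Set.disjoint_left.2 fun x hx hx' => absurd hx.2 (not_lt.2 hx'))]
    have h2 : ∫⁻ r in Set.Ici b, f r = 0 := by
      rw [Measure.restrict_congr_set Ioi_ae_eq_Ici.symm,
        setLIntegral_congr_fun measurableSet_Ioi (fun r hr => hf r hr)]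
      simp
    rw [h2, add_zero]
  have hIres : ∫⁻ r in Set.Ioi (0:ℝ), Ifun r = ∫⁻ r in Set.Ioo 0 b, Ifun r := by
    refine hres Ifun fun r hr => ?_
    simp only [hIfun]
    rw [hGeq r (hb.trans hr), hvanish r hr.le, Real.zero_rpow hp.ne', zero_mul,
      ENNReal.ofReal_zero]
  have hJres : ∫⁻ r in Set.Ioi (0:ℝ), Jfun r = ∫⁻ r in Set.Ioo 0 b, Jfun r := by
    refine hres Jfun fun r hr => ?_
    simp only [hJfun]
    rw [hGeq r (hb.trans hr), hvanish r hr.le, Real.zero_rpow hp.ne', zero_mul,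
      ENNReal.ofReal_zero]
  have hAres : ∫⁻ r in Set.Ioi (0:ℝ), Afun r = ∫⁻ r in Set.Ioo 0 b, Afun r := by
    refine hres Afun fun r hr => ?_
    simp only [hAfun]
    rw [hderiv0 r hr, abs_zero, Real.zero_rpow hp.ne', zero_mul, ENNReal.ofReal_zero]
  -- J is positive and finite
  have hJ0 : (∫⁻ r in Set.Ioo 0 b, Jfun r) ≠ 0 := by
    intro h
    rw [hJrel, hJres, h, mul_zero] at hJpos
    exact lt_irrefl _ hJpos
  have hJT : (∫⁻ r in Set.Ioo 0 b, Jfun r) ≠ ⊤ := by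
    intro h
    rw [hJrel, hJres, h, ENNReal.mul_top hc0] at hJfin
    exact lt_irrefl _ hJfin
  -- integration by parts inequality
  have hIBP : ∫⁻ r in Set.Ioo 0 b, Kfun r
      ≤ ENNReal.ofReal (((N:ℝ) - γ)/p) * ∫⁻ r in Set.Ioo 0 b, Ifun r := by
    set C : ℝ≥0∞ := ENNReal.ofReal (((N:ℝ) - γ)/p) * ∫⁻ r in Set.Ioo 0 b, Ifun r with hC
    have hstep2 : ∀ ε c2 : ℝ, 0 < ε → ε ≤ c2 → c2 < b →
        ∫⁻ r in Set.Ioc ε c2, Kfun r ≤ C + ENNReal.ofReal (g ε ^ p * ε ^ ((N:ℝ)-γ) / p) := by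
      intro ε c2 hε hεc hcb
      have hsub : Set.Icc ε c2 ⊆ Set.Ioo 0 b :=
        fun x hx => ⟨lt_of_lt_of_le hε hx.1, lt_of_le_of_lt hx.2 hcb⟩
      have h01 : Set.Icc ε c2 ⊆ Set.Ioi 0 := fun x hx => (hsub hx).1
      set T1 : ℝ → ℝ := fun t => deriv g t * p * g t ^ (p-1) * t ^ ((N:ℝ)-γ) with hT1
      set T2 : ℝ → ℝ := fun t => g t ^ p * (((N:ℝ)-γ) * t ^ ((N:ℝ)-1-γ)) with hT2
      set k : ℝ → ℝ := fun t => g t ^ (p-1) * |deriv g t| * t ^ ((N:ℝ)-γ) with hk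
      have hcont1 : ContinuousOn T1 (Set.Icc ε c2) := by
        refine (((hdcont.mono h01).mul continuousOn_const).mul
          ((hgcont.mono h01).rpow_const fun x hx => Or.inl (hpos x (hsub hx).1 (hsub hx).2).ne')).mul
          (continuousOn_id.rpow_const fun x hx => Or.inl (ne_of_gt (h01 hx)))
      have hcont2 : ContinuousOn T2 (Set.Icc ε c2) := by
        refine ((hgcont.mono h01).rpow_const fun x hx =>
            Or.inl (hpos x (hsub hx).1 (hsub hx).2).ne').mul
          (continuousOn_const.mul
            (continuousOn_id.rpow_const fun x hx => Or.inl (ne_of_gt (h01 hx))))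
      have hcontk : ContinuousOn k (Set.Icc ε c2) := by
        refine (((hgcont.mono h01).rpow_const fun x hx =>
            Or.inl (hpos x (hsub hx).1 (hsub hx).2).ne').mul (hdcont.mono h01).abs).mul
          (continuousOn_id.rpow_const fun x hx => Or.inl (ne_of_gt (h01 hx)))
      have hderivAt : ∀ t ∈ Set.uIcc ε c2,
          HasDerivAt (fun r => g r ^ p * r ^ ((N:ℝ)-γ)) (T1 t + T2 t) t := by
        intro t ht
        rw [Set.uIcc_of_le hεc] at ht
        have ht0 : 0 < t := (hsub ht).1
        have htb : t < b := (hsub ht).2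
        have h1 : HasDerivAt (fun r => g r ^ p) (deriv g t * p * g t ^ (p-1)) t :=
          (hgdiff t ht0).rpow_const (Or.inl (hpos t ht0 htb).ne')
        have h2 : HasDerivAt (fun r : ℝ => r ^ ((N:ℝ)-γ)) (((N:ℝ)-γ) * t ^ (((N:ℝ)-γ)-1)) t :=
          Real.hasDerivAt_rpow_const (Or.inl ht0.ne')
        have e : ((N:ℝ)-γ)-1 = (N:ℝ)-1-γ := by ring
        rw [e] at h2
        exact h1.mul h2
      have hint1 : IntervalIntegrable T1 volume ε c2 :=
        (by rw [Set.uIcc_of_le hεc]; exact hcont1 :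
          ContinuousOn T1 (Set.uIcc ε c2)).intervalIntegrable
      have hint2 : IntervalIntegrable T2 volume ε c2 :=
        (by rw [Set.uIcc_of_le hεc]; exact hcont2 :
          ContinuousOn T2 (Set.uIcc ε c2)).intervalIntegrable
      have hFTC := intervalIntegral.integral_eq_sub_of_hasDerivAt hderivAt (hint1.add hint2)
      rw [intervalIntegral.integral_add hint1 hint2] at hFTC
      have hkT1 : Set.EqOn k (fun t => (-(1/p)) * T1 t) (Set.uIcc ε c2) := by
        intro t ht
        rw [Set.uIcc_of_le hεc] at ht
        have ht0 : 0 < t := (hsub ht).1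
        simp only [hk, hT1]
        rw [abs_of_nonpos (hderiv_nonpos t ht0)]
        field_simp
      have hk_int : ∫ t in ε..c2, k t = -(1/p) * ∫ t in ε..c2, T1 t := by
        rw [intervalIntegral.integral_congr hkT1, intervalIntegral.integral_const_mul]
      have hT1val : ∫ t in ε..c2, T1 t
          = (g c2 ^ p * c2 ^ ((N:ℝ)-γ) - g ε ^ p * ε ^ ((N:ℝ)-γ)) - ∫ t in ε..c2, T2 t := by
        linarith [hFTC]
      have hgc2 : (0:ℝ) ≤ g c2 ^ p * c2 ^ ((N:ℝ)-γ) := by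
        have h1 : 0 ≤ g c2 := hnonneg c2 (lt_of_lt_of_le hε hεc)
        have h2 : (0:ℝ) < c2 := lt_of_lt_of_le hε hεc
        positivity
      have hkle : ∫ t in ε..c2, k t
          ≤ (1/p) * (∫ t in ε..c2, T2 t) + g ε ^ p * ε ^ ((N:ℝ)-γ) / p := by
        rw [hk_int, hT1val]
        have hip : (0:ℝ) < 1/p := by positivity
        have := mul_nonneg hip.le hgc2
        have heq : -(1/p) * ((g c2 ^ p * c2 ^ ((N:ℝ)-γ) - g ε ^ p * ε ^ ((N:ℝ)-γ))
            - ∫ t in ε..c2, T2 t)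
            = (1/p) * (∫ t in ε..c2, T2 t) + (1/p) * (g ε ^ p * ε ^ ((N:ℝ)-γ))
              - (1/p) * (g c2 ^ p * c2 ^ ((N:ℝ)-γ)) := by ring
        rw [heq]
        have : (1/p) * (g ε ^ p * ε ^ ((N:ℝ)-γ)) = g ε ^ p * ε ^ ((N:ℝ)-γ) / p := by ring
        linarith
      -- pass to lintegrals
      have hKIoc : ∫⁻ r in Set.Ioc ε c2, Kfun r = ENNReal.ofReal (∫ t in ε..c2, k t) := by
        have h1 : ∫⁻ r in Set.Ioc ε c2, Kfun r = ∫⁻ r in Set.Ioc ε c2,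
            ENNReal.ofReal (k r) := by
          refine setLIntegral_congr_fun measurableSet_Ioc (fun r hr => ?_)
          simp only [hKfun, hk, hGeq r (lt_of_lt_of_le hε hr.1.le)]
        rw [h1, intervalIntegral.integral_of_le hεc,
          ← ofReal_integral_eq_lintegral_ofReal
            ((hcontk.integrableOn_Icc).mono_set Set.Ioc_subset_Icc_self)
            ((ae_restrict_iff' measurableSet_Ioc).2 (ae_of_all _ fun r hr => ?_))]
        have hr0 : 0 < r := lt_of_lt_of_le hε hr.1.le
        have hgr : 0 ≤ g r := hnonneg r hr0
        positivity
      have hT2val : ∫ t in ε..c2, T2 t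
          = ((N:ℝ)-γ) * ∫ t in ε..c2, g t ^ p * t ^ ((N:ℝ)-1-γ) := by
        rw [← intervalIntegral.integral_const_mul]
        refine intervalIntegral.integral_congr fun t ht => ?_
        simp only [hT2]
        ring
      have hmint : IntegrableOn (fun t => g t ^ p * t ^ ((N:ℝ)-1-γ)) (Set.Ioc ε c2) volume := by
        have hcm : ContinuousOn (fun t => g t ^ p * t ^ ((N:ℝ)-1-γ)) (Set.Icc ε c2) :=
          ((hgcont.mono h01).rpow_const fun x hx =>
            Or.inl (hpos x (hsub hx).1 (hsub hx).2).ne').mul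
            (continuousOn_id.rpow_const fun x hx => Or.inl (ne_of_gt (h01 hx)))
        exact (hcm.integrableOn_Icc).mono_set Set.Ioc_subset_Icc_self
      have hT2bound : ENNReal.ofReal ((1/p) * ∫ t in ε..c2, T2 t) ≤ C := by
        rw [hT2val]
        have heq2 : (1/p) * (((N:ℝ)-γ) * ∫ t in ε..c2, g t ^ p * t ^ ((N:ℝ)-1-γ))
            = (((N:ℝ)-γ)/p) * ∫ t in ε..c2, g t ^ p * t ^ ((N:ℝ)-1-γ) := by ring
        rw [heq2, ENNReal.ofReal_mul (by positivity)]
        refine mul_le_mul_right ?_ _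
        rw [intervalIntegral.integral_of_le hεc,
          ofReal_integral_eq_lintegral_ofReal hmint
            ((ae_restrict_iff' measurableSet_Ioc).2 (ae_of_all _ fun r hr => ?_))]
        · have h2 : ∫⁻ r in Set.Ioc ε c2, ENNReal.ofReal (g r ^ p * r ^ ((N:ℝ)-1-γ))
              = ∫⁻ r in Set.Ioc ε c2, Ifun r := by
            refine setLIntegral_congr_fun measurableSet_Ioc (fun r hr => ?_)
            simp only [hIfun, hGeq r (lt_of_lt_of_le hε hr.1.le)]
          rw [h2]
          exact lintegral_mono_set (fun x hx => hsub ⟨hx.1.le, hx.2⟩)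
        · have hr0 : 0 < r := lt_of_lt_of_le hε hr.1.le
          have hgr : 0 ≤ g r := hnonneg r hr0
          positivity
      calc ∫⁻ r in Set.Ioc ε c2, Kfun r = ENNReal.ofReal (∫ t in ε..c2, k t) := hKIoc
        _ ≤ ENNReal.ofReal ((1/p) * (∫ t in ε..c2, T2 t)
              + g ε ^ p * ε ^ ((N:ℝ)-γ) / p) := ENNReal.ofReal_le_ofReal hkle
        _ ≤ ENNReal.ofReal ((1/p) * (∫ t in ε..c2, T2 t))
              + ENNReal.ofReal (g ε ^ p * ε ^ ((N:ℝ)-γ) / p) := ENNReal.ofReal_add_le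
        _ ≤ C + ENNReal.ofReal (g ε ^ p * ε ^ ((N:ℝ)-γ) / p) := add_le_add_left hT2bound _
    -- now the limiting argument
    set sq : ℕ → Set ℝ := fun n => Set.Ioc (b/((n:ℝ)+3)) (b - b/((n:ℝ)+3)) with hsq
    have hεpos : ∀ n : ℕ, 0 < b/((n:ℝ)+3) := fun n => div_pos hb (by positivity)
    have hεle : ∀ n : ℕ, b/((n:ℝ)+3) ≤ b - b/((n:ℝ)+3) := by
      intro n
      rw [le_sub_iff_add_le]
      have hn0 : (0:ℝ) ≤ (n:ℝ) := Nat.cast_nonneg n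
      have h3 : (2:ℝ)/((n:ℝ)+3) ≤ 1 := by
        rw [div_le_one (by positivity)]; linarith
      calc b/((n:ℝ)+3) + b/((n:ℝ)+3) = b * (2/((n:ℝ)+3)) := by ring
        _ ≤ b * 1 := mul_le_mul_of_nonneg_left h3 hb.le
        _ = b := mul_one b
    have hcbn : ∀ n : ℕ, b - b/((n:ℝ)+3) < b := fun n => by linarith [hεpos n]
    have hmono : Monotone sq := by
      intro m n hmn
      have hc : ((m:ℝ)+3) ≤ ((n:ℝ)+3) := by
        have := (Nat.cast_le (α := ℝ)).2 hmn
        linarith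
      refine Set.Ioc_subset_Ioc ?_ ?_
      · exact div_le_div_of_nonneg_left hb.le (by positivity) hc
      · have : b/((n:ℝ)+3) ≤ b/((m:ℝ)+3) :=
          div_le_div_of_nonneg_left hb.le (by positivity) hc
        linarith
    have hε0 : Tendsto (fun n : ℕ => b/((n:ℝ)+3)) atTop (nhds 0) := by
      have hden : Tendsto (fun n : ℕ => (n:ℝ)+3) atTop atTop :=
        tendsto_atTop_add_const_right _ 3 tendsto_natCast_atTop_atTop
      exact Tendsto.div_atTop tendsto_const_nhds hden
    have hunion : (⋃ n, sq n) = Set.Ioo 0 b := by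
      ext x
      simp only [Set.mem_iUnion, Set.mem_Ioc, Set.mem_Ioo, hsq]
      constructor
      · rintro ⟨n, h1, h2⟩
        exact ⟨lt_trans (hεpos n) h1, lt_of_le_of_lt h2 (hcbn n)⟩
      · rintro ⟨hx0, hxb⟩
        have hmin : 0 < min x (b - x) := lt_min hx0 (by linarith)
        obtain ⟨n, hn⟩ := (hε0.eventually_lt_const hmin).exists
        refine ⟨n, lt_of_lt_of_le hn (min_le_left _ _), ?_⟩
        have := lt_of_lt_of_le hn (min_le_right _ _)
        linarith
    have hν : ∀ n, ∫⁻ r in sq n, Kfun r = (volume.withDensity Kfun) (sq n) :=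
      fun n => (withDensity_apply Kfun measurableSet_Ioc).symm
    have hνb : ∫⁻ r in Set.Ioo 0 b, Kfun r = (volume.withDensity Kfun) (Set.Ioo 0 b) :=
      (withDensity_apply Kfun measurableSet_Ioo).symm
    have hKtend : Tendsto (fun n => (volume.withDensity Kfun) (sq n)) atTop
        (nhds ((volume.withDensity Kfun) (Set.Ioo 0 b))) := by
      rw [← hunion]
      exact tendsto_measure_iUnion_atTop hmono
    have hδ : Tendsto (fun n : ℕ =>
        ENNReal.ofReal (g (b/((n:ℝ)+3)) ^ p * (b/((n:ℝ)+3)) ^ ((N:ℝ)-γ) / p))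
        atTop (nhds 0) := by
      have h2 : Tendsto (fun n : ℕ => b/((n:ℝ)+3)) atTop (nhdsWithin 0 (Set.Ioi 0)) :=
        tendsto_nhdsWithin_iff.2 ⟨hε0, Eventually.of_forall fun n => hεpos n⟩
      have h3 := hlim.comp h2
      have h4 : Tendsto (fun n : ℕ =>
          g (b/((n:ℝ)+3)) ^ p * (b/((n:ℝ)+3)) ^ ((N:ℝ)-γ) / p) atTop (nhds 0) := by
        have h5 := h3.mul_const (1/p)
        rw [zero_mul] at h5
        refine h5.congr fun n => ?_
        simp only [Function.comp]
        ring
      have h6 := ENNReal.tendsto_ofReal h4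
      rwa [ENNReal.ofReal_zero] at h6
    have hbound : ∀ n, (volume.withDensity Kfun) (sq n)
        ≤ C + ENNReal.ofReal (g (b/((n:ℝ)+3)) ^ p * (b/((n:ℝ)+3)) ^ ((N:ℝ)-γ) / p) := by
      intro n
      rw [← hν]
      exact hstep2 _ _ (hεpos n) (hεle n) (hcbn n)
    have hCtend : Tendsto (fun n : ℕ =>
        C + ENNReal.ofReal (g (b/((n:ℝ)+3)) ^ p * (b/((n:ℝ)+3)) ^ ((N:ℝ)-γ) / p))
        atTop (nhds C) := by
      have := (tendsto_const_nhds (x := C) (f := atTop (α := ℕ))).add hδ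
      rwa [add_zero] at this
    rw [hνb]
    exact le_of_tendsto_of_tendsto' hKtend hCtend hbound
  -- reverse Hölder
  have hHolder : (∫⁻ r in Set.Ioo 0 b, Afun r) ^ (1/p)
      * (∫⁻ r in Set.Ioo 0 b, Jfun r) ^ ((p-1)/p) ≤ ∫⁻ r in Set.Ioo 0 b, Kfun r := by
    have h1p : (0:ℝ) ≤ 1 - p := by linarith
    have hp1'' : p - 1 ≠ 0 := by linarith
    have key : ∀ r : ℝ, 0 < r → ∀ gr : ℝ, 0 < gr → ∀ D : ℝ, 0 ≤ D →
        (gr ^ (p-1) * D * r ^ ((N:ℝ)-γ)) ^ p * (gr ^ p * r ^ ((N:ℝ)-1-β*p/(p-1))) ^ (1-p)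
          = D ^ p * r ^ ((N:ℝ)-1-α*p) := by
      intro r hr gr hgr D hD
      rw [Real.mul_rpow (mul_nonneg (Real.rpow_nonneg hgr.le _) hD) (Real.rpow_nonneg hr.le _),
          Real.mul_rpow (Real.rpow_nonneg hgr.le _) hD,
          Real.mul_rpow (Real.rpow_nonneg hgr.le _) (Real.rpow_nonneg hr.le _),
          ← Real.rpow_mul hgr.le, ← Real.rpow_mul hr.le, ← Real.rpow_mul hgr.le,
          ← Real.rpow_mul hr.le]
      have e1 : gr ^ ((p-1)*p) * D ^ p * r ^ (((N:ℝ)-γ)*p)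
            * (gr ^ (p*(1-p)) * r ^ (((N:ℝ)-1-β*p/(p-1))*(1-p)))
          = D ^ p * (gr ^ ((p-1)*p) * gr ^ (p*(1-p)))
            * (r ^ (((N:ℝ)-γ)*p) * r ^ (((N:ℝ)-1-β*p/(p-1))*(1-p))) := by ring
      rw [e1, ← Real.rpow_add hgr, ← Real.rpow_add hr]
      have e2 : (p-1)*p + p*(1-p) = 0 := by ring
      have e3 : ((N:ℝ)-γ)*p + ((N:ℝ)-1-β*p/(p-1))*(1-p) = (N:ℝ)-1-α*p := by
        rw [hγdef]; field_simp; ring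
      rw [e2, e3, Real.rpow_zero, mul_one]
    have hpoint : ∀ r ∈ Set.Ioo (0:ℝ) b, Afun r = Kfun r ^ p * Jfun r ^ (1 - p) := by
      intro r hr
      have hr0 : (0:ℝ) < r := hr.1
      have hgr : 0 < g r := hpos r hr.1 hr.2
      simp only [hAfun, hKfun, hJfun, hGeq r hr0]
      rw [ENNReal.ofReal_rpow_of_nonneg (by positivity) hp.le,
          ENNReal.ofReal_rpow_of_nonneg (by positivity) h1p,
          ← ENNReal.ofReal_mul (by positivity)]
      rw [key r hr0 (g r) hgr |deriv g r| (abs_nonneg _)]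
    have hA_eq : ∫⁻ r in Set.Ioo 0 b, Afun r
        = ∫⁻ r in Set.Ioo 0 b, Kfun r ^ p * Jfun r ^ (1-p) :=
      setLIntegral_congr_fun measurableSet_Ioo hpoint
    set KK := ∫⁻ r in Set.Ioo 0 b, Kfun r with hKK
    set JJ := ∫⁻ r in Set.Ioo 0 b, Jfun r with hJJ
    have hAle : (∫⁻ r in Set.Ioo 0 b, Afun r) ≤ KK ^ p * JJ ^ (1-p) := by
      rw [hA_eq]
      exact ENNReal.lintegral_mul_norm_pow_le hKmeas.aemeasurable hJmeas.aemeasurable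
        hp.le h1p (by ring)
    by_cases hK0 : KK = 0
    · have hA0 : (∫⁻ r in Set.Ioo 0 b, Afun r) = 0 := by
        refine le_antisymm ?_ zero_le
        simpa [hK0, ENNReal.zero_rpow_of_pos hp] using hAle
      rw [hA0, ENNReal.zero_rpow_of_pos (by positivity : (0:ℝ) < 1/p), zero_mul]
      exact zero_le
    by_cases hKT : KK = ⊤
    · rw [hKT]; exact le_top
    have h1 : (∫⁻ r in Set.Ioo 0 b, Afun r) ^ (1/p) ≤ (KK ^ p * JJ ^ (1-p)) ^ (1/p) :=
      ENNReal.rpow_le_rpow hAle (by positivity)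
    rw [ENNReal.mul_rpow_of_ne_top (ENNReal.rpow_ne_top_of_nonneg hp.le hKT)
        (ENNReal.rpow_ne_top_of_nonneg h1p hJT),
      ← ENNReal.rpow_mul KK, ← ENNReal.rpow_mul JJ, mul_one_div_cancel hp.ne',
      ENNReal.rpow_one] at h1
    calc (∫⁻ r in Set.Ioo 0 b, Afun r) ^ (1/p) * JJ ^ ((p-1)/p)
        ≤ KK * JJ ^ ((1-p)*(1/p)) * JJ ^ ((p-1)/p) := mul_le_mul_left h1 _
      _ = KK * (JJ ^ ((1-p)*(1/p)) * JJ ^ ((p-1)/p)) := by rw [mul_assoc]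
      _ = KK * JJ ^ ((1-p)*(1/p) + (p-1)/p) := by rw [← ENNReal.rpow_add _ _ hJ0 hJT]
      _ = KK := by
          rw [show (1-p)*(1/p) + (p-1)/p = 0 by field_simp; ring, ENNReal.rpow_zero, mul_one]
  -- assembly
  rw [hArel, hJrel, hIrel, hAres, hJres]
  set A := ∫⁻ r in Set.Ioo 0 b, Afun r with hA
  set J := ∫⁻ r in Set.Ioo 0 b, Jfun r with hJ
  set K := ∫⁻ r in Set.Ioo 0 b, Kfun r with hK
  have hcA : (c * A) ^ (1/p) = c ^ (1/p) * A ^ (1/p) :=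
    ENNReal.mul_rpow_of_nonneg _ _ (by positivity)
  have hcJ : (c * J) ^ ((p-1)/p) = c ^ ((p-1)/p) * J ^ ((p-1)/p) :=
    ENNReal.mul_rpow_of_ne_zero hc0 hJ0 _
  have hcc : c ^ (1/p) * c ^ ((p-1)/p) = c := by
    rw [← ENNReal.rpow_add _ _ hc0 hcT]
    have : 1/p + (p-1)/p = 1 := by field_simp; ring
    rw [this, ENNReal.rpow_one]
  have hrearr : ENNReal.ofReal (p / ((N:ℝ) - γ)) * (c ^ (1/p) * A ^ (1/p))
      * (c ^ ((p-1)/p) * J ^ ((p-1)/p))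
      = (c ^ (1/p) * c ^ ((p-1)/p)) * (ENNReal.ofReal (p / ((N:ℝ) - γ))
        * (A ^ (1/p) * J ^ ((p-1)/p))) := by ring
  rw [hcA, hcJ, hrearr, hcc]
  have hfinal : ENNReal.ofReal (p / ((N:ℝ) - γ)) * (A ^ (1/p) * J ^ ((p-1)/p))
      ≤ ∫⁻ r in Set.Ioi (0:ℝ), Ifun r := by
    calc ENNReal.ofReal (p / ((N:ℝ) - γ)) * (A ^ (1/p) * J ^ ((p-1)/p))
        ≤ ENNReal.ofReal (p / ((N:ℝ) - γ)) * K := mul_le_mul_right hHolder _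
      _ ≤ ENNReal.ofReal (p / ((N:ℝ) - γ))
          * (ENNReal.ofReal (((N:ℝ) - γ)/p) * ∫⁻ r in Set.Ioo 0 b, Ifun r) :=
            mul_le_mul_right hIBP _
      _ = (ENNReal.ofReal (p / ((N:ℝ) - γ)) * ENNReal.ofReal (((N:ℝ) - γ)/p))
          * ∫⁻ r in Set.Ioo 0 b, Ifun r := by ring
      _ = ∫⁻ r in Set.Ioo 0 b, Ifun r := by
          rw [← ENNReal.ofReal_mul (by positivity)]
          have : p / ((N:ℝ) - γ) * (((N:ℝ) - γ)/p) = 1 := by field_simp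
          rw [this, ENNReal.ofReal_one, one_mul]
      _ ≤ ∫⁻ r in Set.Ioi (0:ℝ), Ifun r := lintegral_mono_set Set.Ioo_subset_Ioi_self
  exact mul_le_mul_right hfinal c
end
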